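/- As n → ∞, the scaled degree vector (D_{1,n}/n, ..., D_{m,n}/n) of a preferential attachment random caterpillar tree converges in distribution to a Dirichlet distribution with parameters (1, 2, 2, ..., 2, 1). -/

import Mathlib

open Finset Filter MeasureTheory

/-- Number of leaves attached to spine vertex `i` after the choice sequence `ω`. -/
def leafCount {m n : ℕ} (ω : Fin n → Fin m) (i : Fin m) : ℕ :=
  (Finset.univ.filter fun k => ω k = i).card

/-- Number of times vertex `i` was chosen strictly before step `k`. -/
def countBefore {m n : ℕ} (ω : Fin n → Fin m) (i : Fin m) (k : Fin n) : ℕ :=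
  (Finset.univ.filter fun j => j < k ∧ ω j = i).card

/-- Probability of a particular choice sequence `ω` in the (preferential-attachment /
Pólya-Eggenberger) urn with initial composition `τ`: at each step a vertex (color) is
chosen with probability proportional to its current count. -/
noncomputable def seqProb {m n : ℕ} (τ : Fin m → ℕ) (ω : Fin n → Fin m) : ℝ :=
  ∏ k : Fin n,
    (((τ (ω k) + countBefore ω (ω k) k : ℕ) : ℝ) / (((∑ i, τ i) + (k : ℕ) : ℕ) : ℝ))

/-- Initial degrees on the spine: 1 at both endpoints, 2 in the interior. -/
def spineInit (m : ℕ) : Fin m → ℕ := fun i => if i.val = 0 ∨ i.val = m - 1 then 1 else 2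

/-- Degree of spine vertex `i` after the choice sequence `ω`. -/
def deg {m n : ℕ} (τ : Fin m → ℕ) (ω : Fin n → Fin m) (i : Fin m) : ℕ :=
  τ i + leafCount ω i

/-- Expected degree of spine vertex `i` at time `n` in the preferential attachment RCT. -/
noncomputable def degExp (m n : ℕ) (i : Fin m) : ℝ :=
  ∑ ω : Fin n → Fin m, seqProb (spineInit m) ω * (deg (spineInit m) ω i : ℝ)

/-- Expected squared degree of spine vertex `i` at time `n`. -/
noncomputable def degSqExp (m n : ℕ) (i : Fin m) : ℝ :=
  ∑ ω : Fin n → Fin m, seqProb (spineInit m) ω * ((deg (spineInit m) ω i : ℝ)) ^ 2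

/-- Expected mixed moment `E[D_{i,n} D_{j,n}]`. -/
noncomputable def degMixed (m n : ℕ) (i j : Fin m) : ℝ :=
  ∑ ω : Fin n → Fin m,
    seqProb (spineInit m) ω * ((deg (spineInit m) ω i : ℝ) * (deg (spineInit m) ω j : ℝ))

/-!
A choice sequence with leaf counts `c` has probability `∏ τᵢ^(cᵢ) / T^(n)` (rising factorials,
`T = ∑ τᵢ`), and exactly `multinomial c` sequences have leaf counts `c`; so the degree vector
follows the Dirichlet-multinomial law. Rewriting the rising factorials as ratios of factorials
shows that `n^(m-1)` times this weight is uniformly bounded and converges to the Dirichlet(τ)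
density at `c / n`. The expectation is the integral of the step function that is constant on the
cubes of side `1 / n` indexed by the compositions of `n`, so dominated convergence gives the
limit. The caterpillar is the urn with `τ = (1, 2, …, 2, 1)`.
-/

open scoped Nat Topology

namespace PolyaUrn

variable {m n : ℕ}

lemma leafCount_snoc (ω : Fin n → Fin m) (a : Fin m) :
    leafCount (Fin.snoc ω a) = Function.update (leafCount ω) a (leafCount ω a + 1) := by
  funext i
  rcases eq_or_ne i a with rfl | hne
  · simp only [leafCount, Finset.card_filter, Fin.sum_univ_castSucc]
    simp
  · simp only [leafCount, Finset.card_filter, Fin.sum_univ_castSucc]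
    simp [hne, hne.symm, leafCount]

lemma countBefore_snoc_castSucc (ω : Fin n → Fin m) (a i : Fin m) (j : Fin n) :
    countBefore (Fin.snoc ω a) i j.castSucc = countBefore ω i j := by
  simp only [countBefore, Finset.card_filter, Fin.sum_univ_castSucc]
  simp [(Fin.castSucc_lt_last j).asymm]

lemma countBefore_snoc_last (ω : Fin n → Fin m) (a i : Fin m) :
    countBefore (Fin.snoc ω a) i (Fin.last n) = leafCount ω i := by
  simp only [countBefore, leafCount, Finset.card_filter, Fin.sum_univ_castSucc]
  simp [Fin.castSucc_lt_last]

lemma seqProb_snoc (τ : Fin m → ℕ) (ω : Fin n → Fin m) (a : Fin m) :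
    seqProb τ (Fin.snoc ω a) =
      seqProb τ ω * (((τ a + leafCount ω a : ℕ) : ℝ) / (((∑ i, τ i) + n : ℕ) : ℝ)) := by
  simp only [seqProb, Fin.prod_univ_castSucc, Fin.snoc_castSucc, countBefore_snoc_castSucc,
    Fin.val_castSucc, Fin.snoc_last, countBefore_snoc_last, Fin.val_last]

theorem seqProb_eq_prod_ascFactorial (τ : Fin m → ℕ) (ω : Fin n → Fin m) :
    seqProb τ ω =
      (∏ i, ((τ i).ascFactorial (leafCount ω i) : ℝ)) / ((∑ i, τ i).ascFactorial n : ℝ) := by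
  induction n with
  | zero => simp [seqProb, leafCount]
  | succ n ih =>
    obtain ⟨ω, a, rfl⟩ : ∃ ω' a, ω = Fin.snoc ω' a := ⟨Fin.init ω, ω (Fin.last n), by simp⟩
    rw [seqProb_snoc, ih, leafCount_snoc, Nat.ascFactorial_succ, Nat.cast_mul, mul_comm _ (_ : ℝ),
      ← mul_div_mul_comm]
    congr 1
    rw [← Finset.mul_prod_erase _ _ (Finset.mem_univ a),
      ← Finset.mul_prod_erase _ _ (Finset.mem_univ a), Function.update_self,
      Nat.ascFactorial_succ, Nat.cast_mul, mul_assoc]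
    congr 2
    exact Finset.prod_congr rfl fun i hi => by
      rw [Function.update_of_ne (Finset.ne_of_mem_erase hi)]

lemma prod_X_pow_eq_monomial {σ R : Type*} [Fintype σ] [CommSemiring R] (e : σ → ℕ) :
    ∏ i, (MvPolynomial.X i : MvPolynomial σ R) ^ e i =
      MvPolynomial.monomial (Finsupp.equivFunOnFinite.symm e) 1 := by
  rw [MvPolynomial.monomial_eq, Finsupp.prod_fintype _ _ (by simp), map_one, one_mul]
  rfl

lemma prod_X_comp_eq_prod_X_pow_leafCount {R : Type*} [CommSemiring R] (ω : Fin n → Fin m) :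
    ∏ k, (MvPolynomial.X (ω k) : MvPolynomial (Fin m) R) =
      ∏ i, MvPolynomial.X i ^ leafCount ω i := by
  rw [← Finset.prod_fiberwise Finset.univ ω]
  refine Finset.prod_congr rfl fun i _ => ?_
  rw [Finset.prod_congr rfl fun k hk => by rw [(Finset.mem_filter.1 hk).2], Finset.prod_const]
  rfl

/-- Compare the coefficients of `X ^ c` in two expansions of `(∑ i, X i) ^ n`. -/
theorem card_leafCount_eq (c : Fin m → ℕ) (hc : ∑ i, c i = n) :
    #{ω : Fin n → Fin m | leafCount ω = c} = Nat.multinomial Finset.univ c := by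
  classical
  have expand := Finset.sum_pow_eq_sum_piAntidiag Finset.univ
    (MvPolynomial.X : Fin m → MvPolynomial (Fin m) ℕ) n
  rw [← Fin.prod_const, Finset.prod_univ_sum, Fintype.piFinset_univ] at expand
  have := congrArg (MvPolynomial.coeff (Finsupp.equivFunOnFinite.symm c)) expand
  simp_rw [prod_X_comp_eq_prod_X_pow_leafCount, prod_X_pow_eq_monomial,
    ← map_natCast MvPolynomial.C, MvPolynomial.C_mul_monomial, MvPolynomial.coeff_sum,
    MvPolynomial.coeff_monomial, Finsupp.equivFunOnFinite.symm.injective.eq_iff, mul_one] at this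
  rwa [Finset.sum_ite_eq', if_pos (Finset.mem_piAntidiag.2 ⟨hc, by simp⟩), Finset.sum_boole,
    Nat.cast_id, Nat.cast_id] at this

lemma sum_leafCount (ω : Fin n → Fin m) : ∑ i, leafCount ω i = n := by
  simpa [leafCount] using (Finset.card_eq_sum_card_fiberwise (f := ω) (s := Finset.univ)
    (t := Finset.univ) (by simp)).symm

/-- The Dirichlet-multinomial law of the leaf counts. -/
noncomputable def polyaWeight (τ : Fin m → ℕ) (n : ℕ) (c : Fin m → ℕ) : ℝ :=
  Nat.multinomial Finset.univ c * (∏ i, ((τ i).ascFactorial (c i) : ℝ)) /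
    ((∑ i, τ i).ascFactorial n : ℝ)

theorem sum_seqProb_mul_comp_leafCount (τ : Fin m → ℕ) (g : (Fin m → ℕ) → ℝ) :
    ∑ ω : Fin n → Fin m, seqProb τ ω * g (leafCount ω) =
      ∑ c ∈ Finset.piAntidiag Finset.univ n, polyaWeight τ n c * g c := by
  classical
  rw [← Finset.sum_fiberwise_of_maps_to (g := leafCount) (t := Finset.piAntidiag Finset.univ n)
    fun ω _ => Finset.mem_piAntidiag.2 ⟨sum_leafCount ω, by simp⟩]
  refine Finset.sum_congr rfl fun c hc => ?_
  rw [Finset.sum_congr rfl fun ω hω => by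
      rw [seqProb_eq_prod_ascFactorial, (Finset.mem_filter.1 hω).2],
    Finset.sum_const, card_leafCount_eq c (Finset.mem_piAntidiag.1 hc).1, nsmul_eq_mul,
    polyaWeight]
  ring

lemma ascFactorial_succ_mul_factorial (a c : ℕ) :
    (a + 1).ascFactorial c * a ! = (c + 1).ascFactorial a * c ! := by
  rw [mul_comm, Nat.factorial_mul_ascFactorial, mul_comm, Nat.factorial_mul_ascFactorial,
    add_comm]

variable {d : ℕ}

theorem pow_mul_polyaWeight (α : Fin (d + 1) → ℕ) {c : Fin (d + 1) → ℕ} (hc : ∑ i, c i = n)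
    (hn : n ≠ 0) :
    (n : ℝ) ^ d * polyaWeight (fun i => α i + 1) n c =
      ((∑ i, α i + d)! : ℝ) *
        ((n : ℝ) ^ (∑ i, α i + d) / ((n + 1).ascFactorial (∑ i, α i + d) : ℝ)) *
        ∏ i, ((c i + 1).ascFactorial (α i) : ℝ) / (n : ℝ) ^ α i / ((α i)! : ℝ) := by
  set A := ∑ i, α i
  have hT : ∑ i, (α i + 1) = A + d + 1 := by
    simp [Finset.sum_add_distrib, A, add_assoc]
  have hmult : (Nat.multinomial Finset.univ c : ℝ) * ∏ i, ((c i)! : ℝ) = (n ! : ℝ) := by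
    rw [mul_comm]; exact_mod_cast hc ▸ Nat.multinomial_spec Finset.univ c
  have hasc : (∏ i, ((α i + 1).ascFactorial (c i) : ℝ)) * ∏ i, ((α i)! : ℝ) =
      (∏ i, ((c i + 1).ascFactorial (α i) : ℝ)) * ∏ i, ((c i)! : ℝ) := by
    simp_rw [← Finset.prod_mul_distrib]
    exact_mod_cast Finset.prod_congr rfl fun i _ => ascFactorial_succ_mul_factorial (α i) (c i)
  have hTasc : ((A + d + 1).ascFactorial n : ℝ) * ((A + d)! : ℝ) =
      ((n + 1).ascFactorial (A + d) : ℝ) * (n ! : ℝ) := by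
    exact_mod_cast ascFactorial_succ_mul_factorial (A + d) n
  have hpow : ∏ i, (n : ℝ) ^ α i = (n : ℝ) ^ A := Finset.prod_pow_eq_pow_sum _ _ _
  have hn' : (n : ℝ) ≠ 0 := Nat.cast_ne_zero.2 hn
  have hTasc_ne : ((A + d + 1).ascFactorial n : ℝ) ≠ 0 :=
    Nat.cast_ne_zero.2 (Nat.ascFactorial_pos _ _).ne'
  have hNasc_ne : ((n + 1).ascFactorial (A + d) : ℝ) ≠ 0 :=
    Nat.cast_ne_zero.2 (Nat.ascFactorial_pos _ _).ne'
  rw [polyaWeight, hT, Finset.prod_div_distrib, Finset.prod_div_distrib, hpow]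
  field_simp
  rw [pow_add]
  linear_combination ((n : ℝ) ^ d * (n : ℝ) ^ A * ((n + 1).ascFactorial (A + d) : ℝ) *
      (Nat.multinomial Finset.univ c : ℝ)) * hasc +
    ((n : ℝ) ^ d * (n : ℝ) ^ A * ((n + 1).ascFactorial (A + d) : ℝ) *
      ∏ i, ((c i + 1).ascFactorial (α i) : ℝ)) * hmult -
    ((n : ℝ) ^ A * (n : ℝ) ^ d * ∏ i, ((c i + 1).ascFactorial (α i) : ℝ)) * hTasc

lemma tendsto_ascFactorial_div_pow (a : ℕ) {u : ℕ → ℕ} {z : ℝ}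
    (hu : Tendsto (fun n => (u n : ℝ) / n) atTop (𝓝 z)) :
    Tendsto (fun n => ((u n + 1).ascFactorial a : ℝ) / (n : ℝ) ^ a) atTop (𝓝 (z ^ a)) := by
  have factor (j : ℕ) : Tendsto (fun n => ((u n : ℝ) + 1 + j) / n) atTop (𝓝 z) := by
    simpa [add_assoc, add_div] using hu.add (tendsto_const_div_atTop_nhds_zero_nat (1 + j : ℝ))
  have := tendsto_finsetProd (Finset.range a) fun j _ => factor j
  rw [Finset.prod_const, Finset.card_range] at this
  refine this.congr fun n => ?_
  rw [Nat.ascFactorial_eq_prod_range, Finset.prod_div_distrib, Finset.prod_const,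
    Finset.card_range]
  push_cast
  rfl

lemma tendsto_pow_div_ascFactorial (k : ℕ) :
    Tendsto (fun n : ℕ => (n : ℝ) ^ k / ((n + 1).ascFactorial k : ℝ)) atTop (𝓝 1) := by
  have h := (tendsto_ascFactorial_div_pow k (u := id) (z := 1) ?_).inv₀ (by simp)
  · simpa using h
  · refine tendsto_const_nhds.congr' ?_
    filter_upwards [eventually_ne_atTop 0] with n hn
    simp [hn]

lemma ascFactorial_div_pow_le {a u : ℕ} (hu : u ≤ n) (hn : n ≠ 0) :
    ((u + 1).ascFactorial a : ℝ) / (n : ℝ) ^ a ≤ ((a : ℝ) + 1) ^ a := by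
  have hn' : (0 : ℝ) < n := by positivity
  rw [div_le_iff₀ (by positivity), ← mul_pow]
  have : u + a ≤ (a + 1) * n := by nlinarith [Nat.one_le_iff_ne_zero.2 hn]
  exact_mod_cast (Nat.ascFactorial_le_pow_add u a).trans (Nat.pow_le_pow_left this a)

lemma pow_div_ascFactorial_le_one (k : ℕ) : (n : ℝ) ^ k / ((n + 1).ascFactorial k : ℝ) ≤ 1 := by
  rw [div_le_one (by exact_mod_cast Nat.ascFactorial_pos n k)]
  exact_mod_cast (Nat.pow_le_pow_left n.le_succ k).trans (Nat.pow_succ_le_ascFactorial _ k)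

theorem tendsto_pow_mul_polyaWeight (α : Fin (d + 1) → ℕ) {c : ℕ → Fin (d + 1) → ℕ}
    (hc : ∀ n, ∑ i, c n i = n) {z : Fin (d + 1) → ℝ}
    (hz : Tendsto (fun n i => (c n i : ℝ) / n) atTop (𝓝 z)) :
    Tendsto (fun n : ℕ => (n : ℝ) ^ d * polyaWeight (fun i => α i + 1) n (c n)) atTop
      (𝓝 (((∑ i, α i + d)! : ℝ) * ∏ i, z i ^ α i / ((α i)! : ℝ))) := by
  have prefactor := (tendsto_const_nhds (x := ((∑ i, α i + d)! : ℝ))).mul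
    (tendsto_pow_div_ascFactorial (∑ i, α i + d))
  have factors := tendsto_finsetProd Finset.univ fun i _ =>
    (tendsto_ascFactorial_div_pow (α i) (tendsto_pi_nhds.1 hz i)).div_const ((α i)! : ℝ)
  rw [mul_one] at prefactor
  refine (prefactor.mul factors).congr' ?_
  filter_upwards [eventually_ne_atTop 0] with n hn
  rw [pow_mul_polyaWeight α (hc n) hn]

lemma polyaWeight_nonneg (τ : Fin m → ℕ) (n : ℕ) (c : Fin m → ℕ) : 0 ≤ polyaWeight τ n c := by
  unfold polyaWeight; positivity

theorem pow_mul_polyaWeight_le (α : Fin (d + 1) → ℕ) {c : Fin (d + 1) → ℕ}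
    (hc : ∑ i, c i = n) (hn : n ≠ 0) :
    (n : ℝ) ^ d * polyaWeight (fun i => α i + 1) n c ≤
      ((∑ i, α i + d)! : ℝ) * ∏ i, ((α i : ℝ) + 1) ^ α i / ((α i)! : ℝ) := by
  rw [pow_mul_polyaWeight α hc hn]
  have hle : ∀ i, c i ≤ n := fun i => hc ▸ Finset.single_le_sum (by simp) (Finset.mem_univ i)
  calc _ ≤ ((∑ i, α i + d)! : ℝ) * 1 * ∏ i, ((α i : ℝ) + 1) ^ α i / ((α i)! : ℝ) := by
        gcongr
        · exact pow_div_ascFactorial_le_one _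
        · exact ascFactorial_div_pow_le (hle _) hn
    _ = _ := by rw [mul_one]

def cell (n : ℕ) (y : Fin d → ℕ) : Set (Fin d → ℝ) :=
  Set.univ.pi fun i => Set.Ico ((y i : ℝ) / n) (((y i : ℝ) + 1) / n)

lemma mem_cell_iff (hn : n ≠ 0) {x : Fin d → ℝ} {y : Fin d → ℕ} :
    x ∈ cell n y ↔ ∀ i, 0 ≤ x i ∧ ⌊x i * n⌋₊ = y i := by
  have hn' : (0 : ℝ) < n := by positivity
  simp only [cell, Set.mem_univ_pi, Set.mem_Ico, div_le_iff₀ hn', lt_div_iff₀ hn']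
  refine forall_congr' fun i => ⟨fun ⟨h₁, h₂⟩ => ?_, fun ⟨h₀, h⟩ => ?_⟩
  · have h₀ : 0 ≤ x i := nonneg_of_mul_nonneg_left ((y i).cast_nonneg.trans h₁) hn'
    exact ⟨h₀, (Nat.floor_eq_iff (by positivity)).2 ⟨h₁, h₂⟩⟩
  · exact (Nat.floor_eq_iff (by positivity)).1 h

lemma measurableSet_cell (n : ℕ) (y : Fin d → ℕ) : MeasurableSet (cell n y) :=
  MeasurableSet.univ_pi fun _ => measurableSet_Ico

lemma measureReal_cell (n : ℕ) (y : Fin d → ℕ) :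
    volume.real (cell n y) = ((n : ℝ) ^ d)⁻¹ := by
  have side : ∀ i, ((y i : ℝ) + 1) / n - (y i : ℝ) / n = (n : ℝ)⁻¹ := fun i => by ring
  simp [cell, measureReal_def, volume_pi_pi, Real.volume_Ico, side]

noncomputable def riemannStep (n : ℕ) (w : (Fin (d + 1) → ℕ) → ℝ) (x : Fin d → ℝ) : ℝ :=
  ∑ c ∈ Finset.piAntidiag Finset.univ n,
    (cell n (Fin.init c)).indicator (fun _ => (n : ℝ) ^ d * w c) x

lemma integral_riemannStep (hn : n ≠ 0) (w : (Fin (d + 1) → ℕ) → ℝ) :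
    ∫ x, riemannStep n w x = ∑ c ∈ Finset.piAntidiag Finset.univ n, w c := by
  have hn' : (n : ℝ) ^ d ≠ 0 := by positivity
  unfold riemannStep
  rw [integral_finsetSum]
  · refine Finset.sum_congr rfl fun c _ => ?_
    rw [integral_indicator_const _ (measurableSet_cell n _), measureReal_cell, smul_eq_mul,
      inv_mul_cancel_left₀ hn']
  · intro c _
    refine (integrable_indicator_iff (measurableSet_cell n _)).2 (integrableOn_const ?_)
    simp [cell, volume_pi_pi, ENNReal.prod_ne_top]

lemma init_injOn_piAntidiag :
    Set.InjOn (Fin.init : (Fin (d + 1) → ℕ) → Fin d → ℕ)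
      ((Finset.univ : Finset (Fin (d + 1))).piAntidiag n : Set (Fin (d + 1) → ℕ)) := by
  intro c hc c' hc' h
  have hc := (Finset.mem_piAntidiag.1 hc).1
  have hc' := (Finset.mem_piAntidiag.1 hc').1
  rw [Fin.sum_univ_castSucc] at hc hc'
  have : ∀ i : Fin d, c i.castSucc = c' i.castSucc := fun i => congrFun h i
  rw [← Fin.snoc_init_self c, ← Fin.snoc_init_self c', h]
  congr 1
  simp only [this] at hc
  omega

lemma riemannStep_eq_of_mem (hn : n ≠ 0) {w : (Fin (d + 1) → ℕ) → ℝ} {c : Fin (d + 1) → ℕ}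
    (hc : c ∈ Finset.piAntidiag Finset.univ n) {x : Fin d → ℝ} (hx : x ∈ cell n (Fin.init c)) :
    riemannStep n w x = (n : ℝ) ^ d * w c := by
  rw [riemannStep, Finset.sum_eq_single_of_mem c hc, Set.indicator_of_mem hx]
  intro c' hc' hne
  refine Set.indicator_of_notMem (fun hx' => hne (init_injOn_piAntidiag hc' hc ?_)) _
  funext i
  exact ((mem_cell_iff hn).1 hx' i).2.symm.trans ((mem_cell_iff hn).1 hx i).2

lemma riemannStep_eq_zero {w : (Fin (d + 1) → ℕ) → ℝ} {x : Fin d → ℝ}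
    (h : ∀ c ∈ Finset.piAntidiag Finset.univ n, x ∉ cell n (Fin.init c)) :
    riemannStep n w x = 0 :=
  Finset.sum_eq_zero fun c hc => Set.indicator_of_notMem (h c hc) _

/-- The standard simplex of `ℝ^(d+1)`, projected onto its first `d` coordinates. -/
def lowerSimplex (d : ℕ) : Set (Fin d → ℝ) := {x | (∀ i, 0 ≤ x i) ∧ ∑ i, x i ≤ 1}

lemma measurableSet_lowerSimplex (d : ℕ) : MeasurableSet (lowerSimplex d) :=
  ((isClosed_le continuous_const continuous_id).inter
    (isClosed_le (continuous_finsetSum _ fun i _ => continuous_apply i) continuous_const)).measurableSet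

noncomputable def floorComposition (n : ℕ) (x : Fin d → ℝ) : Fin (d + 1) → ℕ :=
  Fin.snoc (fun i => ⌊x i * n⌋₊) (n - ∑ i, ⌊x i * n⌋₊)

lemma sum_floor_le {x : Fin d → ℝ} (hx : x ∈ lowerSimplex d) (n : ℕ) :
    ∑ i, ⌊x i * n⌋₊ ≤ n := by
  have : ∑ i, (⌊x i * n⌋₊ : ℝ) ≤ n := calc
    _ ≤ ∑ i, x i * n := Finset.sum_le_sum fun i _ => Nat.floor_le (by have := hx.1 i; positivity)
    _ = (∑ i, x i) * n := (Finset.sum_mul ..).symm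
    _ ≤ n := mul_le_of_le_one_left n.cast_nonneg hx.2
  exact_mod_cast this

lemma floorComposition_mem {x : Fin d → ℝ} (hx : x ∈ lowerSimplex d) (n : ℕ) :
    floorComposition n x ∈ Finset.piAntidiag Finset.univ n := by
  have := sum_floor_le hx n
  simp [floorComposition, Fin.sum_univ_castSucc]
  omega

lemma mem_cell_floorComposition (hn : n ≠ 0) {x : Fin d → ℝ} (hx : ∀ i, 0 ≤ x i) :
    x ∈ cell n (Fin.init (floorComposition n x)) := by
  rw [floorComposition, Fin.init_snoc, mem_cell_iff hn]
  exact fun i => ⟨hx i, rfl⟩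

lemma tendsto_floorComposition_div {x : Fin d → ℝ} (hx : x ∈ lowerSimplex d) :
    Tendsto (fun n i => (floorComposition n x i : ℝ) / n) atTop
      (𝓝 (Fin.snoc x (1 - ∑ i, x i))) := by
  have floor_div (i : Fin d) : Tendsto (fun n : ℕ => (⌊x i * n⌋₊ : ℝ) / n) atTop (𝓝 (x i)) :=
    (tendsto_nat_floor_mul_div_atTop (hx.1 i)).comp tendsto_natCast_atTop_atTop
  rw [tendsto_pi_nhds]
  refine Fin.lastCases ?_ fun i => by simpa [floorComposition] using floor_div i
  rw [Fin.snoc_last]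
  have last := tendsto_const_nhds (x := (1 : ℝ)).sub
    (tendsto_finsetSum Finset.univ fun i _ => floor_div i)
  refine last.congr' ?_
  filter_upwards [eventually_ne_atTop 0] with n hn
  simp [floorComposition, Nat.cast_sub (sum_floor_le hx n), sub_div, ← Finset.sum_div, hn]

lemma eventually_notMem_cell {x : Fin d → ℝ} (hx : x ∉ lowerSimplex d) :
    ∀ᶠ n in atTop, ∀ c ∈ Finset.piAntidiag Finset.univ n, x ∉ cell n (Fin.init c) := by
  simp only [lowerSimplex, Set.mem_ofPred_eq, not_and_or, not_forall, not_le] at hx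
  rcases hx with ⟨i, hi⟩ | hsum
  · filter_upwards [eventually_ne_atTop 0] with n hn c _ hxc
    exact hi.not_ge ((mem_cell_iff hn).1 hxc i).1
  have hgrow := (tendsto_natCast_atTop_atTop.const_mul_atTop (sub_pos.2 hsum)).eventually_gt_atTop
    (d : ℝ)
  filter_upwards [eventually_ne_atTop 0, hgrow] with n hn hdn c hc hxc
  have hc : ∑ i : Fin d, (c i.castSucc : ℝ) ≤ n := by
    have := (Finset.mem_piAntidiag.1 hc).1
    rw [Fin.sum_univ_castSucc] at this
    exact_mod_cast (Nat.le_add_right _ _).trans this.le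
  have hle : (∑ i, x i) * n ≤ ∑ i : Fin d, ((c i.castSucc : ℝ) + 1) := by
    rw [Finset.sum_mul]
    refine Finset.sum_le_sum fun i _ => ?_
    have hfloor : ⌊x i * n⌋₊ = c i.castSucc := ((mem_cell_iff hn).1 hxc i).2
    exact hfloor ▸ (Nat.lt_floor_add_one _).le
  simp only [Finset.sum_add_distrib, Finset.sum_const, Finset.card_univ, Fintype.card_fin,
    nsmul_eq_mul, mul_one] at hle
  nlinarith

lemma cell_subset_cube (hn : n ≠ 0) {y : Fin d → ℕ} (hy : ∀ i, y i ≤ n) :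
    cell n y ⊆ Set.Icc 0 2 := by
  intro x hx
  refine ⟨fun i => ((mem_cell_iff hn).1 hx i).1, fun i => ?_⟩
  have hn' : (1 : ℝ) ≤ n := by exact_mod_cast Nat.one_le_iff_ne_zero.2 hn
  have hyi : (y i : ℝ) ≤ n := by exact_mod_cast hy i
  have hlt := (hx i (Set.mem_univ i)).2
  rw [lt_div_iff₀ (by positivity)] at hlt
  show x i ≤ 2
  nlinarith

lemma abs_riemannStep_le (hn : n ≠ 0) {w : (Fin (d + 1) → ℕ) → ℝ} {B : ℝ}
    (hB : ∀ c ∈ Finset.piAntidiag Finset.univ n, |(n : ℝ) ^ d * w c| ≤ B) (x : Fin d → ℝ) :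
    |riemannStep n w x| ≤ (Set.Icc 0 2).indicator (fun _ => B) x := by
  by_cases hx : ∃ c ∈ Finset.piAntidiag Finset.univ n, x ∈ cell n (Fin.init c)
  · obtain ⟨c, hc, hxc⟩ := hx
    have hcn : ∀ i, Fin.init c i ≤ n := fun i =>
      (Finset.single_le_sum (fun j _ => Nat.zero_le (c j)) (Finset.mem_univ i.castSucc)).trans
        (Finset.mem_piAntidiag.1 hc).1.le
    rw [riemannStep_eq_of_mem hn hc hxc, Set.indicator_of_mem (cell_subset_cube hn hcn hxc)]
    exact hB c hc
  · simp only [not_exists, not_and] at hx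
    have hB0 : 0 ≤ B := (abs_nonneg _).trans
      (hB _ (floorComposition_mem (x := 0) ⟨fun _ => le_rfl, by simp⟩ n))
    rw [riemannStep_eq_zero hx, abs_zero]
    exact Set.indicator_nonneg (fun _ _ => hB0) x

lemma tendsto_riemannStep {w : ℕ → (Fin (d + 1) → ℕ) → ℝ} {F : (Fin (d + 1) → ℝ) → ℝ}
    (hF : ∀ (c : ℕ → Fin (d + 1) → ℕ) z, (∀ n, c n ∈ Finset.piAntidiag Finset.univ n) →
      Tendsto (fun n i => (c n i : ℝ) / n) atTop (𝓝 z) →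
        Tendsto (fun n : ℕ => (n : ℝ) ^ d * w n (c n)) atTop (𝓝 (F z)))
    (x : Fin d → ℝ) :
    Tendsto (fun n => riemannStep n (w n) x) atTop
      (𝓝 ((lowerSimplex d).indicator (fun x => F (Fin.snoc x (1 - ∑ i, x i))) x)) := by
  by_cases hx : x ∈ lowerSimplex d
  · rw [Set.indicator_of_mem hx]
    refine (hF _ _ (floorComposition_mem hx) (tendsto_floorComposition_div hx)).congr' ?_
    filter_upwards [eventually_ne_atTop 0] with n hn
    exact (riemannStep_eq_of_mem hn (floorComposition_mem hx n)
      (mem_cell_floorComposition hn hx.1)).symm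
  · rw [Set.indicator_of_notMem hx]
    refine tendsto_const_nhds.congr' ?_
    filter_upwards [eventually_notMem_cell hx] with n hn using (riemannStep_eq_zero hn).symm

theorem tendsto_sum_piAntidiag {w : ℕ → (Fin (d + 1) → ℕ) → ℝ} {F : (Fin (d + 1) → ℝ) → ℝ}
    {B : ℝ}
    (hB : ∀ᶠ n : ℕ in atTop, ∀ c ∈ Finset.piAntidiag Finset.univ n, |(n : ℝ) ^ d * w n c| ≤ B)
    (hF : ∀ (c : ℕ → Fin (d + 1) → ℕ) z, (∀ n, c n ∈ Finset.piAntidiag Finset.univ n) →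
      Tendsto (fun n i => (c n i : ℝ) / n) atTop (𝓝 z) →
        Tendsto (fun n : ℕ => (n : ℝ) ^ d * w n (c n)) atTop (𝓝 (F z))) :
    Tendsto (fun n => ∑ c ∈ Finset.piAntidiag Finset.univ n, w n c) atTop
      (𝓝 (∫ x in lowerSimplex d, F (Fin.snoc x (1 - ∑ i, x i)))) := by
  have hcube : Integrable ((Set.Icc (0 : Fin d → ℝ) 2).indicator fun _ => B) :=
    (integrable_indicator_iff measurableSet_Icc).2 (integrableOn_const isCompact_Icc.measure_ne_top)
  have hDCT := tendsto_integral_filter_of_dominated_convergence _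
    (Eventually.of_forall fun n => (Finset.measurable_sum _ fun c _ =>
      measurable_const.indicator (measurableSet_cell n _)).aestronglyMeasurable)
    (by filter_upwards [hB, eventually_ne_atTop 0] with n hBn hn
        exact Eventually.of_forall (abs_riemannStep_le hn hBn))
    hcube (Eventually.of_forall (tendsto_riemannStep hF))
  rw [integral_indicator (measurableSet_lowerSimplex d)] at hDCT
  refine hDCT.congr' ?_
  filter_upwards [eventually_ne_atTop 0] with n hn using integral_riemannStep hn _

noncomputable def dirichletDensity {m : ℕ} (α z : Fin m → ℝ) : ℝ :=
  Real.Gamma (∑ i, α i) / (∏ i, Real.Gamma (α i)) * ∏ i, z i ^ (α i - 1)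

lemma dirichletDensity_snoc (α : Fin (d + 1) → ℝ) (x : Fin d → ℝ) (t : ℝ) :
    dirichletDensity α (Fin.snoc x t) =
      Real.Gamma (∑ i, α i) / (∏ i, Real.Gamma (α i)) * (∏ i : Fin d, x i ^ (α i.castSucc - 1)) *
        t ^ (α (Fin.last d) - 1) := by
  simp only [dirichletDensity, Fin.prod_univ_castSucc, Fin.snoc_castSucc, Fin.snoc_last, mul_assoc]

lemma dirichletDensity_natCast_add_one (α : Fin (d + 1) → ℕ) (z : Fin (d + 1) → ℝ) :
    dirichletDensity (fun i => ((α i + 1 : ℕ) : ℝ)) z =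
      ((∑ i, α i + d)! : ℝ) * ∏ i, z i ^ α i / ((α i)! : ℝ) := by
  have hsum : ∑ i, ((α i + 1 : ℕ) : ℝ) = ((∑ i, α i + d : ℕ) : ℝ) + 1 := by
    push_cast [Finset.sum_add_distrib]; simp; ring
  unfold dirichletDensity
  rw [hsum, Real.Gamma_nat_eq_factorial]
  simp only [Nat.cast_add, Nat.cast_one, Real.Gamma_nat_eq_factorial, add_sub_cancel_right,
    Real.rpow_natCast, Finset.prod_div_distrib]
  ring

theorem tendsto_sum_seqProb_integral_dirichlet (τ : Fin (d + 1) → ℕ) (hτ : ∀ i, 0 < τ i)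
    {f : (Fin (d + 1) → ℝ) → ℝ} (hf : Continuous f) {C : ℝ} (hC : ∀ x, |f x| ≤ C) :
    Tendsto (fun n : ℕ => ∑ ω : Fin n → Fin (d + 1),
        seqProb τ ω * f (fun i => (deg τ ω i : ℝ) / n))
      atTop (𝓝 (∫ x in lowerSimplex d, f (Fin.snoc x (1 - ∑ i, x i)) *
        dirichletDensity (fun i => (τ i : ℝ)) (Fin.snoc x (1 - ∑ i, x i)))) := by
  obtain ⟨α, rfl⟩ : ∃ α : Fin (d + 1) → ℕ, τ = fun i => α i + 1 :=
    ⟨fun i => τ i - 1, funext fun i => (Nat.sub_add_cancel (hτ i)).symm⟩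
  have hsum (n : ℕ) := sum_seqProb_mul_comp_leafCount (n := n) (fun i => α i + 1)
    fun c => f fun i => ((α i + 1 + c i : ℕ) : ℝ) / n
  simp only [deg, hsum]
  refine tendsto_sum_piAntidiag
    (w := fun n c => polyaWeight (fun i => α i + 1) n c * f fun i => ((α i + 1 + c i : ℕ) : ℝ) / n)
    (F := fun z => f z * dirichletDensity (fun i => ((α i + 1 : ℕ) : ℝ)) z)
    (B := ((∑ i, α i + d)! : ℝ) * (∏ i, ((α i : ℝ) + 1) ^ α i / ((α i)! : ℝ)) * C) ?_ ?_
  · filter_upwards [eventually_ne_atTop 0] with n hn c hc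
    have hw := polyaWeight_nonneg (fun i => α i + 1) n c
    rw [← mul_assoc, abs_mul, abs_of_nonneg (by positivity)]
    exact mul_le_mul (pow_mul_polyaWeight_le α (Finset.mem_piAntidiag.1 hc).1 hn) (hC _)
      (abs_nonneg _) (by positivity)
  · intro c z hc hz
    have harg : Tendsto (fun n i => ((α i + 1 + c n i : ℕ) : ℝ) / n) atTop (𝓝 z) := by
      rw [tendsto_pi_nhds] at hz ⊢
      intro i
      simpa [add_div] using (tendsto_const_div_atTop_nhds_zero_nat ((α i : ℝ) + 1)).add (hz i)
    rw [dirichletDensity_natCast_add_one]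
    have hw := tendsto_pow_mul_polyaWeight α (fun n => (Finset.mem_piAntidiag.1 (hc n)).1) hz
    refine (((hf.tendsto z).comp harg).mul hw).congr fun n => ?_
    simp only [Function.comp_apply]
    ring

end PolyaUrn

lemma sum_spineInit (k : ℕ) : ∑ i, spineInit (k + 2) i = 2 * k + 2 := by
  have hmid : ∀ i : Fin k, spineInit (k + 2) i.castSucc.succ = 2 := fun i => by
    have := i.isLt
    rw [spineInit, if_neg (by simp only [Fin.val_succ, Fin.val_castSucc]; omega)]
  rw [Fin.sum_univ_succ, Fin.sum_univ_castSucc]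
  simp only [hmid]
  simp [spineInit]
  ring

/-- the scaled degree vector `(D_{1,n}/n, …, D_{m,n}/n)` of a preferential
attachment RCT with `m = k+2 ≥ 2` spine vertices converges in distribution, as `n → ∞`,
to the Dirichlet distribution with parameters `(1,2,…,2,1)`: for every bounded continuous
test function the expectations converge to the integral against the Dirichlet density
(parametrized by the first `m-1` coordinates on the simplex). -/
theorem pa_rct_dirichlet_limit (k : ℕ) (f : (Fin (k + 2) → ℝ) → ℝ)
    (hf : Continuous f) (hb : ∃ C, ∀ x, |f x| ≤ C) :
    Tendsto
      (fun n : ℕ => ∑ ω : Fin n → Fin (k + 2),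
        seqProb (spineInit (k + 2)) ω *
          f (fun i => (deg (spineInit (k + 2)) ω i : ℝ) / n))
      atTop
      (nhds (∫ x in {x : Fin (k + 1) → ℝ | (∀ i, 0 ≤ x i) ∧ ∑ i, x i ≤ 1},
        f (Fin.snoc x (1 - ∑ i, x i)) *
          ((Real.Gamma (2 * ((k : ℝ) + 2) - 2) /
              ∏ i : Fin (k + 2), Real.Gamma ((spineInit (k + 2) i : ℝ))) *
            (∏ i : Fin (k + 1),
              x i ^ ((spineInit (k + 2) (Fin.castSucc i) : ℝ) - 1)) *
            (1 - ∑ i, x i) ^ ((spineInit (k + 2) (Fin.last (k + 1)) : ℝ) - 1)))) := by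
  obtain ⟨C, hC⟩ := hb
  have hpos : ∀ i, 0 < spineInit (k + 2) i := fun i => by unfold spineInit; split_ifs <;> norm_num
  have hsum : ∑ i, (spineInit (k + 2) i : ℝ) = 2 * ((k : ℝ) + 2) - 2 := by
    rw [← Nat.cast_sum, sum_spineInit]; push_cast; ring
  have key := PolyaUrn.tendsto_sum_seqProb_integral_dirichlet _ hpos hf hC
  simp only [PolyaUrn.dirichletDensity_snoc, hsum] at key
  exact key
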